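/- Let n be a nonempty finite type and let H be an n×n complex Hermitian matrix with a unit eigenvector Φ₀, H·Φ₀ = E₀·Φ₀, such that the E₀-eigenspace of H is one-dimensional and every eigenvalue λ of H satisfies λ = E₀ or |λ − E₀| ≥ γ, where γ > 0. Let w : ℝ → ℂ be an integrable function with ∫_ℝ w(t) dt = 1 and ∫_ℝ w(t)·exp(i t ω) dt = 0 for every real ω with |ω| ≥ γ. Then for every n×n complex matrix B, (∫_ℝ w(t)·exp(itH)·B·exp(−itH) dt)·Φ₀ = ⟨Φ₀, B·Φ₀⟩·Φ₀; equivalently, writing :B: := B − ⟨Φ₀, BΦ₀⟩·1, one has (∫_ℝ w(t)·exp(itH)·(:B:)·exp(−itH) dt)·Φ₀ = 0. -/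

import Mathlib

open Matrix MeasureTheory

attribute [local instance] Matrix.normedAddCommGroup Matrix.normedSpace

/-!
On the ground state the right factor `e^{-itH}` only contributes the phase `e^{-itE₀}`, so
`ℛ(B)Φ₀ = ∫ w(t) e^{-itE₀} e^{itH} BΦ₀ dt`. In an orthonormal eigenbasis `u_j` of `H` this
multiplies the `u_j`-component of `BΦ₀` by `ŵ(λ_j - E₀)`, which is `1` when `λ_j = E₀` and `0`
otherwise by the gap. Eigenvectors for `λ_j ≠ E₀` are orthogonal to `Φ₀`, and by nondegeneracy
those for `λ_j = E₀` are unimodular multiples of `Φ₀`; so every surviving term equals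
`⟨Φ₀, BΦ₀⟩ ⟨u_j, Φ₀⟩ u_j`, and these sum to `⟨Φ₀, BΦ₀⟩ Φ₀`.
-/

/-- The transform `ŵ(ω) = ∫ w(t) e^{itω} dt` of the paper. -/
noncomputable def filterTransform (w : ℝ → ℂ) (ω : ℝ) : ℂ :=
  ∫ t : ℝ, w t * Complex.exp (Complex.I * t * ω)

theorem filterTransform_zero (w : ℝ → ℂ) : filterTransform w 0 = ∫ t : ℝ, w t := by
  simp [filterTransform]

theorem filterTransform_mul_exp (w : ℝ → ℂ) (ω ω' : ℝ) :
    filterTransform (fun t => w t * Complex.exp (Complex.I * t * ω')) ω =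
      filterTransform w (ω + ω') := by
  unfold filterTransform
  congr 1 with t
  rw [mul_assoc, ← Complex.exp_add]
  push_cast
  ring_nf

theorem MeasureTheory.Integrable.mul_exp_I_mul {w : ℝ → ℂ} (hw : Integrable w) (ω : ℝ) :
    Integrable fun t : ℝ => w t * Complex.exp (Complex.I * t * ω) := by
  refine hw.mul_bdd (c := 1) (by fun_prop) (.of_forall fun t => ?_)
  rw [show Complex.I * t * ω = ((t * ω : ℝ) : ℂ) * Complex.I by push_cast; ring,
    Complex.norm_exp_ofReal_mul_I]

section Matrix

variable {n : Type*} [Fintype n]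

theorem Matrix.IsHermitian.star_dotProduct_eq_zero_of_ne {𝕜 : Type*} [RCLike 𝕜]
    {H : Matrix n n 𝕜} (hH : H.IsHermitian) {u v : n → 𝕜} {a b : ℝ}
    (hu : H *ᵥ u = (a : 𝕜) • u) (hv : H *ᵥ v = (b : 𝕜) • v) (hab : a ≠ b) :
    star u ⬝ᵥ v = 0 := by
  have h : (a : 𝕜) * (star u ⬝ᵥ v) = b * (star u ⬝ᵥ v) :=
    calc (a : 𝕜) * (star u ⬝ᵥ v) = star (H *ᵥ u) ⬝ᵥ v := by
          rw [hu, star_smul, smul_dotProduct, RCLike.star_def, RCLike.conj_ofReal, smul_eq_mul]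
      _ = star u ⬝ᵥ (H *ᵥ v) := by rw [star_mulVec, hH.eq, dotProduct_mulVec]
      _ = b * (star u ⬝ᵥ v) := by rw [hv, dotProduct_smul, smul_eq_mul]
  exact (mul_eq_mul_right_iff.mp h).resolve_left (by exact_mod_cast hab)

variable [DecidableEq n]

theorem Matrix.exp_mulVec_of_mulVec_eq_smul {A : Matrix n n ℂ} {v : n → ℂ} {μ : ℂ}
    (hv : A *ᵥ v = μ • v) : NormedSpace.exp A *ᵥ v = Complex.exp μ • v := by
  have hpow : ∀ k : ℕ, A ^ k *ᵥ v = μ ^ k • v := by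
    intro k
    induction k with
    | zero => simp
    | succ k ih => rw [pow_succ', ← mulVec_mulVec, ih, mulVec_smul, hv, smul_smul, ← pow_succ]
  -- `Norms.Operator` makes matrices a Banach algebra, where `exp` is the sum of its series.
  have hA := open scoped Norms.Operator in (NormedSpace.exp_series_hasSum_exp' (𝕂 := ℂ) A).map
    (mulVec.addMonoidHomLeft v) (continuous_id.matrix_mulVec continuous_const)
  have hμ := (NormedSpace.exp_series_hasSum_exp' (𝕂 := ℂ) μ).smul_const v
  rw [← Complex.exp_eq_exp_ℂ] at hμ
  refine hA.unique ?_
  convert hμ using 2 with k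
  simp [mulVec.addMonoidHomLeft, smul_mulVec, hpow, smul_smul]

theorem Matrix.exp_smul_mulVec_of_mulVec_eq_smul {A : Matrix n n ℂ} {v : n → ℂ} {μ : ℂ}
    (hv : A *ᵥ v = μ • v) (z : ℂ) :
    NormedSpace.exp (z • A) *ᵥ v = Complex.exp (z * μ) • v :=
  exp_mulVec_of_mulVec_eq_smul (by rw [smul_mulVec, hv, smul_smul])

theorem Matrix.IsHermitian.exp_I_smul_mem_unitaryGroup {H : Matrix n n ℂ} (hH : H.IsHermitian)
    (t : ℝ) : NormedSpace.exp ((Complex.I * t) • H) ∈ unitaryGroup n ℂ := by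
  have hstar : star ((Complex.I * t) • H) = -((Complex.I * t) • H) := by
    rw [star_smul, star_mul', Complex.star_def, Complex.conj_I, Complex.conj_ofReal,
      star_eq_conjTranspose, hH.eq, neg_mul, neg_smul]
  rw [mem_unitaryGroup_iff', star_eq_conjTranspose, ← Matrix.exp_conjTranspose,
    ← star_eq_conjTranspose, hstar,
    ← Matrix.exp_add_of_commute _ _ (Commute.refl ((Complex.I * t) • H)).neg_left,
    neg_add_cancel, NormedSpace.exp_zero]

theorem Matrix.norm_mul_mul_le_of_mem_unitaryGroup {𝕜 : Type*} [RCLike 𝕜] {U V : Matrix n n 𝕜}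
    (hU : U ∈ unitaryGroup n 𝕜) (hV : V ∈ unitaryGroup n 𝕜) (B : Matrix n n 𝕜) :
    ‖U * B * V‖ ≤ Fintype.card n ^ 2 * ‖B‖ := by
  refine (norm_le_iff (by positivity)).2 fun i j => ?_
  calc ‖(U * B * V) i j‖ = ‖∑ l, ∑ k, U i k * B k l * V l j‖ := by
        simp [mul_apply, Finset.sum_mul]
    _ ≤ ∑ l : n, ∑ k : n, ‖B‖ := by
        refine (norm_sum_le _ _).trans (Finset.sum_le_sum fun l _ => ?_)
        refine (norm_sum_le _ _).trans (Finset.sum_le_sum fun k _ => ?_)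
        rw [norm_mul, norm_mul]
        calc ‖U i k‖ * ‖B k l‖ * ‖V l j‖ ≤ 1 * ‖B‖ * 1 := by
              gcongr
              exacts [entry_norm_bound_of_unitary hU i k, norm_entry_le_entrywise_sup_norm B,
                entry_norm_bound_of_unitary hV l j]
          _ = ‖B‖ := by ring
    _ = Fintype.card n ^ 2 * ‖B‖ := by simp [sq, mul_assoc]

theorem Matrix.IsHermitian.integral_smul_conj_exp_mulVec {H : Matrix n n ℂ} (hH : H.IsHermitian)
    {w : ℝ → ℂ} (hw : Integrable w) (B : Matrix n n ℂ) (v : n → ℂ) :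
    (∫ t : ℝ, w t • (NormedSpace.exp ((Complex.I * t) • H) * B *
      NormedSpace.exp ((-(Complex.I * t)) • H))) *ᵥ v =
    ∫ t : ℝ, w t • ((NormedSpace.exp ((Complex.I * t) • H) * B *
      NormedSpace.exp ((-(Complex.I * t)) • H)) *ᵥ v) := by
  let L : Matrix n n ℂ →L[ℂ] n → ℂ := ((mulVecBilin ℂ ℂ).flip v).toContinuousLinearMap
  have hexp : Continuous (NormedSpace.exp : Matrix n n ℂ → Matrix n n ℂ) :=
    open scoped Norms.Operator in NormedSpace.exp_continuous
  have hbound : ∀ t : ℝ, ‖NormedSpace.exp ((Complex.I * t) • H) * B *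
      NormedSpace.exp ((-(Complex.I * t)) • H)‖ ≤ Fintype.card n ^ 2 * ‖B‖ := by
    intro t
    have h := hH.exp_I_smul_mem_unitaryGroup (-t)
    rw [Complex.ofReal_neg, mul_neg] at h
    exact norm_mul_mul_le_of_mem_unitaryGroup (hH.exp_I_smul_mem_unitaryGroup t) h B
  have hint := hw.smul_bdd _ (Continuous.aestronglyMeasurable (by fun_prop))
    (.of_forall hbound)
  exact (L.integral_comp_comm hint).symm.trans
    (integral_congr_ae (.of_forall fun t => smul_mulVec (w t) _ v))

theorem Matrix.IsHermitian.mulVec_eigenvectorBasis_eq_ofReal_smul {𝕜 : Type*} [RCLike 𝕜]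
    {H : Matrix n n 𝕜} (hH : H.IsHermitian) (j : n) :
    H *ᵥ ⇑(hH.eigenvectorBasis j) = (hH.eigenvalues j : 𝕜) • ⇑(hH.eigenvectorBasis j) := by
  rw [hH.mulVec_eigenvectorBasis, RCLike.real_smul_eq_coe_smul (K := 𝕜)]

theorem Matrix.IsHermitian.sum_star_dotProduct_smul_eigenvectorBasis {𝕜 : Type*} [RCLike 𝕜]
    {H : Matrix n n 𝕜} (hH : H.IsHermitian) (v : n → 𝕜) :
    ∑ j, (star ⇑(hH.eigenvectorBasis j) ⬝ᵥ v) • ⇑(hH.eigenvectorBasis j) = v := by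
  have := congrArg WithLp.ofLp ((hH.eigenvectorBasis).sum_repr' (WithLp.toLp 2 v))
  simpa [EuclideanSpace.inner_eq_star_dotProduct, dotProduct_comm] using this

theorem Matrix.IsHermitian.integral_smul_exp_mulVec {H : Matrix n n ℂ} (hH : H.IsHermitian)
    {w : ℝ → ℂ} (hw : Integrable w) (v : n → ℂ) :
    ∫ t : ℝ, w t • (NormedSpace.exp ((Complex.I * t) • H) *ᵥ v) =
      ∑ j, ((star ⇑(hH.eigenvectorBasis j) ⬝ᵥ v) * filterTransform w (hH.eigenvalues j)) •
        ⇑(hH.eigenvectorBasis j) := by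
  have hexpand : ∀ t : ℝ, w t • (NormedSpace.exp ((Complex.I * t) • H) *ᵥ v) =
      ∑ j, ((star ⇑(hH.eigenvectorBasis j) ⬝ᵥ v) *
        (w t * Complex.exp (Complex.I * t * hH.eigenvalues j))) • ⇑(hH.eigenvectorBasis j) := by
    intro t
    conv_lhs => rw [← hH.sum_star_dotProduct_smul_eigenvectorBasis v]
    simp only [mulVec_sum, mulVec_smul, Finset.smul_sum, smul_smul, mul_left_comm (w t),
      exp_smul_mulVec_of_mulVec_eq_smul (hH.mulVec_eigenvectorBasis_eq_ofReal_smul _)]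
    -- the two sides differ only in `RCLike ℂ` versus `ℂ` instance paths
    rfl
  rw [integral_congr_ae (.of_forall hexpand), integral_finsetSum _ fun j _ =>
    ((hw.mul_exp_I_mul _).const_mul _).smul_const _]
  simp only [integral_smul_const, integral_const_mul, filterTransform]

theorem Matrix.IsHermitian.integral_smul_conj_exp_mulVec_of_mulVec_eq {H : Matrix n n ℂ}
    (hH : H.IsHermitian) {w : ℝ → ℂ} (hw : Integrable w) (B : Matrix n n ℂ) {E : ℝ}
    {Φ : n → ℂ} (hΦ : H *ᵥ Φ = (E : ℂ) • Φ) :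
    (∫ t : ℝ, w t • (NormedSpace.exp ((Complex.I * t) • H) * B *
      NormedSpace.exp ((-(Complex.I * t)) • H))) *ᵥ Φ =
      ∑ j, ((star ⇑(hH.eigenvectorBasis j) ⬝ᵥ (B *ᵥ Φ)) *
        filterTransform w (hH.eigenvalues j - E)) • ⇑(hH.eigenvectorBasis j) := by
  have hphase : ∀ t : ℝ, w t • ((NormedSpace.exp ((Complex.I * t) • H) * B *
      NormedSpace.exp ((-(Complex.I * t)) • H)) *ᵥ Φ) =
      (w t * Complex.exp (Complex.I * t * (-E : ℝ))) •
        (NormedSpace.exp ((Complex.I * t) • H) *ᵥ (B *ᵥ Φ)) := by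
    intro t
    rw [← mulVec_mulVec, exp_smul_mulVec_of_mulVec_eq_smul hΦ, mulVec_smul, ← mulVec_mulVec,
      smul_smul]
    push_cast
    ring_nf
  rw [hH.integral_smul_conj_exp_mulVec hw, integral_congr_ae (.of_forall hphase),
    hH.integral_smul_exp_mulVec (hw.mul_exp_I_mul _)]
  simp only [filterTransform_mul_exp, sub_eq_add_neg]

theorem Matrix.IsHermitian.sum_smul_eigenvectorBasis_eq_of_nondegenerate {H : Matrix n n ℂ}
    (hH : H.IsHermitian) {E₀ : ℝ} {Φ₀ : n → ℂ} (hΦ₀unit : star Φ₀ ⬝ᵥ Φ₀ = 1)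
    (hΦ₀eig : H *ᵥ Φ₀ = (E₀ : ℂ) • Φ₀)
    (hnondeg : ∀ v : n → ℂ, H *ᵥ v = (E₀ : ℂ) • v → ∃ c : ℂ, v = c • Φ₀)
    {f : ℝ → ℂ} (hf₀ : f E₀ = 1) (hf : ∀ j, hH.eigenvalues j ≠ E₀ → f (hH.eigenvalues j) = 0)
    (v : n → ℂ) :
    ∑ j, ((star ⇑(hH.eigenvectorBasis j) ⬝ᵥ v) * f (hH.eigenvalues j)) •
      ⇑(hH.eigenvectorBasis j) = (star Φ₀ ⬝ᵥ v) • Φ₀ := by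
  calc _ = ∑ j, (star Φ₀ ⬝ᵥ v) • ((star ⇑(hH.eigenvectorBasis j) ⬝ᵥ Φ₀) •
        ⇑(hH.eigenvectorBasis j)) := Finset.sum_congr rfl fun j _ => ?_
    _ = (star Φ₀ ⬝ᵥ v) • Φ₀ := by
        rw [← Finset.smul_sum, hH.sum_star_dotProduct_smul_eigenvectorBasis]
  by_cases hj : hH.eigenvalues j = E₀
  · obtain ⟨c, hc⟩ := hnondeg _ (hj ▸ hH.mulVec_eigenvectorBasis_eq_ofReal_smul j)
    rw [hj, hf₀, hc, star_smul, smul_dotProduct, smul_dotProduct, hΦ₀unit]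
    module
  · rw [hf j hj, hH.star_dotProduct_eq_zero_of_ne (hH.mulVec_eigenvectorBasis_eq_ofReal_smul j)
      hΦ₀eig hj, mul_zero, zero_smul, smul_zero]

end Matrix

theorem quasiAdiabatic_filter_ground_state_general
    {n : Type*} [Fintype n] [DecidableEq n]
    (Hm : Matrix n n ℂ) (hH : Hmᴴ = Hm)
    (γ : ℝ) (E₀ : ℝ) (Φ₀ : n → ℂ)
    (hΦ₀unit : dotProduct (star Φ₀) Φ₀ = 1)
    (hΦ₀eig : Hm.mulVec Φ₀ = (E₀ : ℂ) • Φ₀)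
    (hnondeg : ∀ v : n → ℂ, Hm.mulVec v = (E₀ : ℂ) • v → ∃ c : ℂ, v = c • Φ₀)
    (hspec : ∀ μ ∈ spectrum ℂ Hm, μ = (E₀ : ℂ) ∨ γ ≤ ‖μ - (E₀ : ℂ)‖)
    (w : ℝ → ℂ) (hw : MeasureTheory.Integrable w)
    (hw0 : (∫ t : ℝ, w t) = 1)
    (hFourier : ∀ ω : ℝ, γ ≤ |ω| →
      (∫ t : ℝ, w t * Complex.exp (Complex.I * t * ω)) = 0) :
    ∀ B : Matrix n n ℂ,
      (∫ t : ℝ, w t • (NormedSpace.exp ((Complex.I * t) • Hm) * B *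
          NormedSpace.exp ((-(Complex.I * t)) • Hm))).mulVec Φ₀ =
        dotProduct (star Φ₀) (B.mulVec Φ₀) • Φ₀ ∧
      (∫ t : ℝ, w t • (NormedSpace.exp ((Complex.I * t) • Hm) *
          (B - dotProduct (star Φ₀) (B.mulVec Φ₀) • 1) *
          NormedSpace.exp ((-(Complex.I * t)) • Hm))).mulVec Φ₀ = 0 := by
  have hherm : Hm.IsHermitian := hH
  have hgap : ∀ j, hherm.eigenvalues j ≠ E₀ →
      filterTransform w (hherm.eigenvalues j - E₀) = 0 := by
    intro j hj
    have hmem : (hherm.eigenvalues j : ℂ) ∈ spectrum ℂ Hm :=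
      hherm.spectrum_eq_image_range ▸ ⟨_, ⟨j, rfl⟩, rfl⟩
    refine hFourier _ (((hspec _ hmem).resolve_left (by exact_mod_cast hj)).trans_eq ?_)
    rw [← Complex.ofReal_sub, Complex.norm_real, Real.norm_eq_abs]
  have hground : ∀ B : Matrix n n ℂ,
      (∫ t : ℝ, w t • (NormedSpace.exp ((Complex.I * t) • Hm) * B *
        NormedSpace.exp ((-(Complex.I * t)) • Hm))) *ᵥ Φ₀ = (star Φ₀ ⬝ᵥ (B *ᵥ Φ₀)) • Φ₀ := by
    intro B
    rw [hherm.integral_smul_conj_exp_mulVec_of_mulVec_eq hw B hΦ₀eig]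
    exact hherm.sum_smul_eigenvectorBasis_eq_of_nondegenerate hΦ₀unit hΦ₀eig hnondeg
      (f := fun ω => filterTransform w (ω - E₀)) (by rwa [sub_self, filterTransform_zero]) hgap _
  intro B
  refine ⟨hground B, ?_⟩
  rw [hground, sub_mulVec, smul_mulVec, one_mulVec, dotProduct_sub, dotProduct_smul, hΦ₀unit,
    smul_eq_mul, mul_one, sub_self, zero_smul]

/-- Property (RUVZUP0) of Section 4: for a Hamiltonian `H` with
nondegenerate ground state `Φ₀` (eigenvalue `E₀`) and spectral gap `γ`, the
quasi-adiabatic filtering `ℛ(·) = ∫ w(t) e^{itH}(·)e^{−itH} dt` (with `ŵ(0) = 1`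
and `ŵ(ω) = 0` for `|ω| ≥ γ`) maps `B` to an operator acting on `Φ₀` as the scalar
`⟨Φ₀, BΦ₀⟩`; equivalently, `ℛ(:B:)Φ₀ = 0` for `:B: = B − ⟨Φ₀, BΦ₀⟩·1`. -/
theorem quasiAdiabatic_filter_ground_state
    {n : Type*} [Fintype n] [DecidableEq n] [Nonempty n]
    (Hm : Matrix n n ℂ) (hH : Hmᴴ = Hm)
    (γ : ℝ) (hγ : 0 < γ) (E₀ : ℝ) (Φ₀ : n → ℂ)
    (hΦ₀unit : dotProduct (star Φ₀) Φ₀ = 1)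
    (hΦ₀eig : Hm.mulVec Φ₀ = (E₀ : ℂ) • Φ₀)
    (hnondeg : ∀ v : n → ℂ, Hm.mulVec v = (E₀ : ℂ) • v → ∃ c : ℂ, v = c • Φ₀)
    (hspec : ∀ μ ∈ spectrum ℂ Hm, μ = (E₀ : ℂ) ∨ γ ≤ ‖μ - (E₀ : ℂ)‖)
    (w : ℝ → ℂ) (hw : MeasureTheory.Integrable w)
    (hw0 : (∫ t : ℝ, w t) = 1)
    (hFourier : ∀ ω : ℝ, γ ≤ |ω| →
      (∫ t : ℝ, w t * Complex.exp (Complex.I * t * ω)) = 0) :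
    ∀ B : Matrix n n ℂ,
      (∫ t : ℝ, w t • (NormedSpace.exp ((Complex.I * t) • Hm) * B *
          NormedSpace.exp ((-(Complex.I * t)) • Hm))).mulVec Φ₀ =
        dotProduct (star Φ₀) (B.mulVec Φ₀) • Φ₀ ∧
      (∫ t : ℝ, w t • (NormedSpace.exp ((Complex.I * t) • Hm) *
          (B - dotProduct (star Φ₀) (B.mulVec Φ₀) • 1) *
          NormedSpace.exp ((-(Complex.I * t)) • Hm))).mulVec Φ₀ = 0 :=
  quasiAdiabatic_filter_ground_state_general Hm hH γ E₀ Φ₀ hΦ₀unit hΦ₀eig hnondeg hspec w hw hw0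
    hFourier
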